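/- For n ≥ 1 and m even, the ideal I_G of the commutative polynomial algebra S(V) = k[x₁,…,xₙ] generated by p_k = Σᵢ xᵢ^{km} (k = 1,…,n−1) and r = (x₁⋯xₙ)^{m/p}, and the ideal I_W of the skew-polynomial algebra S₋₁(V) (with relations xᵢxⱼ = −xⱼxᵢ for i ≠ j) generated by the same elements, have the same underlying subspace of the vector space S spanned by standard monomials x₁^{k₁}⋯xₙ^{kₙ}. -/

import Mathlib

/-!
Both ideals are spanned over `k` by the monomial multiples `x^α g` of the generators `g`.
Each generator is a monomial or a sum of even powers `xᵢ^{lm}`, and the sign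
`(−1)^{Σ_{i>j} αᵢβⱼ}` is unchanged when an even power is added to `α` or `β`, so a skew product
of `x^β` with `x^α g` (on either side) is `±x^{α+β} g`. Hence the span of these multiples is
closed under skew multiplication, and conversely each of them is `±` a skew product of a
monomial with a generator.
-/

open MvPolynomial TensorProduct

noncomputable section

variable (k : Type) [Field k] (n : ℕ)

/-- The sign `(−1)^{Σ_{i>j} αᵢ βⱼ}` governing the skew-commutative product. -/
def skewSign (α β : Fin n →₀ ℕ) : k :=
  (-1 : k) ^ (∑ i : Fin n, ∑ j : Fin n, if j < i then α i * β j else 0)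

/-- The skew-polynomial multiplication on the vector space of polynomials,
determined on standard monomials by `X^α ⋆ X^β = (−1)^{Σ_{i>j} αᵢ βⱼ} X^{α+β}`;
this realises `S₋₁(V)`, with `xᵢ xⱼ = −xⱼ xᵢ` for `i ≠ j`, on the common underlying
vector space of `S(V)` and `S₋₁(V)`. -/
def skewMul : MvPolynomial (Fin n) k →ₗ[k] MvPolynomial (Fin n) k →ₗ[k] MvPolynomial (Fin n) k :=
  (MvPolynomial.basisMonomials (Fin n) k).constr k fun α =>
    (MvPolynomial.basisMonomials (Fin n) k).constr k fun β =>
      skewSign k n α β • monomial (α + β) (1 : k)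

/-- The generators `p_l = Σᵢ xᵢ^{lm}` for `l = 1, …, n−1` together with
`r = (x₁ ⋯ xₙ)^{m/p}`. -/
def invGens (m p : ℕ) : Set (MvPolynomial (Fin n) k) :=
  (Set.range fun l : Fin (n - 1) => ∑ i : Fin n, (X i : MvPolynomial (Fin n) k) ^ ((l.val + 1) * m))
    ∪ {∏ i : Fin n, (X i : MvPolynomial (Fin n) k) ^ (m / p)}

/-- The two-sided ideal of the skew-polynomial algebra `S₋₁(V)` generated by a set `gens`:
the smallest subspace containing `gens` and stable under left and right skew multiplication. -/
def skewIdeal (gens : Set (MvPolynomial (Fin n) k)) : Submodule k (MvPolynomial (Fin n) k) :=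
  sInf {J : Submodule k (MvPolynomial (Fin n) k) | gens ⊆ J ∧
    ∀ x ∈ J, ∀ r : MvPolynomial (Fin n) k, skewMul k n r x ∈ J ∧ skewMul k n x r ∈ J}

open Pointwise

namespace MvPolynomial

variable {σ R : Type*} [CommSemiring R]

def monomialMultiples (S : Set (MvPolynomial σ R)) : Set (MvPolynomial σ R) :=
  Set.range (fun α : σ →₀ ℕ => monomial α (1 : R)) • S

theorem monomial_mul_mem_monomialMultiples {S : Set (MvPolynomial σ R)} (α : σ →₀ ℕ)
    {g : MvPolynomial σ R} (hg : g ∈ S) : monomial α 1 * g ∈ monomialMultiples S :=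
  Set.smul_mem_smul ⟨α, rfl⟩ hg

theorem span_range_monomial_one :
    Submodule.span R (Set.range fun α : σ →₀ ℕ => monomial α (1 : R)) = ⊤ := by
  simpa only [coe_basisMonomials] using (basisMonomials σ R).span_eq

theorem restrictScalars_ideal_span (S : Set (MvPolynomial σ R)) :
    (Ideal.span S).restrictScalars R = Submodule.span R (monomialMultiples S) :=
  (Submodule.span_smul_of_span_eq_top span_range_monomial_one S).symm

theorem monomial_mul_sum_X_pow (α : σ →₀ ℕ) (s : Finset σ) (e : ℕ) :
    monomial α (1 : R) * ∑ i ∈ s, X i ^ e = ∑ i ∈ s, monomial (α + Finsupp.single i e) 1 := by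
  simp only [Finset.mul_sum, X_pow_eq_monomial, monomial_mul, one_mul]

end MvPolynomial

section

variable {k n}

theorem skewMul_monomial (α β : Fin n →₀ ℕ) :
    skewMul k n (monomial α 1) (monomial β 1)
      = skewSign k n α β • monomial (α + β) (1 : k) := by
  have h (γ : Fin n →₀ ℕ) : monomial γ (1 : k) = basisMonomials (Fin n) k γ := by
    rw [coe_basisMonomials]
  rw [h α, h β, skewMul, Module.Basis.constr_basis, Module.Basis.constr_basis]

theorem skewSign_ne_zero (α β : Fin n →₀ ℕ) : skewSign k n α β ≠ 0 :=
  pow_ne_zero _ (neg_ne_zero.mpr one_ne_zero)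

theorem skewSign_add_left (α β γ : Fin n →₀ ℕ) :
    skewSign k n (α + β) γ = skewSign k n α γ * skewSign k n β γ := by
  simp only [skewSign, ← pow_add, ← Finset.sum_add_distrib, Finsupp.add_apply, add_mul,
    ← ite_add_zero]

theorem skewSign_add_right (α β γ : Fin n →₀ ℕ) :
    skewSign k n α (β + γ) = skewSign k n α β * skewSign k n α γ := by
  simp only [skewSign, ← pow_add, ← Finset.sum_add_distrib, Finsupp.add_apply, mul_add,
    ← ite_add_zero]

theorem skewSign_single_left (β : Fin n →₀ ℕ) (i : Fin n) {e : ℕ} (he : Even e) :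
    skewSign k n (Finsupp.single i e) β = 1 := by
  refine Even.neg_one_pow (Finset.even_sum _ fun i' _ => Finset.even_sum _ fun j _ => ?_)
  split_ifs
  · rw [Finsupp.single_apply]
    split_ifs
    exacts [he.mul_right _, by simp]
  · exact .zero

theorem skewSign_single_right (α : Fin n →₀ ℕ) (i : Fin n) {e : ℕ} (he : Even e) :
    skewSign k n α (Finsupp.single i e) = 1 := by
  refine Even.neg_one_pow (Finset.even_sum _ fun i' _ => Finset.even_sum _ fun j _ => ?_)
  split_ifs
  · rw [Finsupp.single_apply]
    split_ifs
    exacts [he.mul_left _, by simp]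
  · exact .zero

def IsSkewNormal (g : MvPolynomial (Fin n) k) : Prop :=
  ∀ α β : Fin n →₀ ℕ,
    (∃ c : k, c ≠ 0 ∧
      skewMul k n (monomial β 1) (monomial α 1 * g) = c • (monomial (β + α) 1 * g)) ∧
    ∃ c : k, c ≠ 0 ∧
      skewMul k n (monomial α 1 * g) (monomial β 1) = c • (monomial (α + β) 1 * g)

theorem isSkewNormal_monomial (γ : Fin n →₀ ℕ) : IsSkewNormal (monomial γ (1 : k)) := by
  intro α β
  simp only [monomial_mul, one_mul, skewMul_monomial]
  exact ⟨⟨_, skewSign_ne_zero _ _, by rw [add_assoc]⟩,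
    ⟨_, skewSign_ne_zero _ _, by rw [add_right_comm]⟩⟩

theorem isSkewNormal_sum_X_pow {e : ℕ} (he : Even e) :
    IsSkewNormal (∑ i, X i ^ e : MvPolynomial (Fin n) k) := by
  intro α β
  simp only [monomial_mul_sum_X_pow, map_sum, LinearMap.sum_apply, skewMul_monomial,
    Finset.smul_sum]
  refine ⟨⟨_, skewSign_ne_zero β α, Finset.sum_congr rfl fun i _ => ?_⟩,
    ⟨_, skewSign_ne_zero α β, Finset.sum_congr rfl fun i _ => ?_⟩⟩
  · rw [skewSign_add_right, skewSign_single_right _ _ he, mul_one, add_assoc]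
  · rw [skewSign_add_left, skewSign_single_left _ _ he, mul_one, add_right_comm]

theorem isSkewNormal_of_mem_invGens {m : ℕ} (hm : Even m) (p : ℕ) :
    ∀ g ∈ invGens k n m p, IsSkewNormal g := by
  rintro g (⟨l, rfl⟩ | rfl)
  · exact isSkewNormal_sum_X_pow (hm.mul_left _)
  · simp only [X_pow_eq_monomial, ← monomial_sum_one]
    exact isSkewNormal_monomial _

theorem subset_skewIdeal (S : Set (MvPolynomial (Fin n) k)) : S ⊆ skewIdeal k n S :=
  fun _ hg => Submodule.mem_sInf.mpr fun _ hJ => hJ.1 hg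

theorem skewMul_mem_skewIdeal_left {S : Set (MvPolynomial (Fin n) k)} {x : MvPolynomial (Fin n) k}
    (hx : x ∈ skewIdeal k n S) (f : MvPolynomial (Fin n) k) :
    skewMul k n f x ∈ skewIdeal k n S :=
  Submodule.mem_sInf.mpr fun J hJ => (hJ.2 x (Submodule.mem_sInf.mp hx J hJ) f).1

theorem skewIdeal_le {S : Set (MvPolynomial (Fin n) k)} {J : Submodule k (MvPolynomial (Fin n) k)}
    (hS : S ⊆ J) (hJ : ∀ x ∈ J, ∀ f, skewMul k n f x ∈ J ∧ skewMul k n x f ∈ J) :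
    skewIdeal k n S ≤ J :=
  sInf_le ⟨hS, hJ⟩

theorem span_monomialMultiples_le_skewIdeal {S : Set (MvPolynomial (Fin n) k)}
    (hS : ∀ g ∈ S, IsSkewNormal g) :
    Submodule.span k (monomialMultiples S) ≤ skewIdeal k n S := by
  rw [Submodule.span_le]
  rintro _ ⟨_, ⟨α, rfl⟩, g, hg, rfl⟩
  obtain ⟨c, hc, h⟩ := (hS g hg 0 α).1
  rw [monomial_zero', C_1, one_mul, add_zero] at h
  change monomial α 1 * g ∈ skewIdeal k n S
  rw [← inv_smul_smul₀ hc (monomial α 1 * g), ← h]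
  exact Submodule.smul_mem _ _ (skewMul_mem_skewIdeal_left (subset_skewIdeal S hg) _)

theorem skewMul_mem_span_monomialMultiples {S : Set (MvPolynomial (Fin n) k)}
    (hS : ∀ g ∈ S, IsSkewNormal g) {x : MvPolynomial (Fin n) k}
    (hx : x ∈ Submodule.span k (monomialMultiples S)) (f : MvPolynomial (Fin n) k) :
    skewMul k n f x ∈ Submodule.span k (monomialMultiples S) ∧
      skewMul k n x f ∈ Submodule.span k (monomialMultiples S) := by
  set J := Submodule.span k (monomialMultiples S)
  have hmem (α : Fin n →₀ ℕ) {g} (hg : g ∈ S) : monomial α 1 * g ∈ J :=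
    Submodule.subset_span (monomial_mul_mem_monomialMultiples α hg)
  have hleft : Submodule.map₂ (skewMul k n) ⊤ J ≤ J := by
    rw [← span_range_monomial_one, Submodule.map₂_span_span, Submodule.span_le]
    rintro _ ⟨_, ⟨β, rfl⟩, _, ⟨_, ⟨α, rfl⟩, g, hg, rfl⟩, rfl⟩
    obtain ⟨c, -, h⟩ := (hS g hg α β).1
    simp only [SetLike.mem_coe, h]
    exact J.smul_mem c (hmem (β + α) hg)
  have hright : Submodule.map₂ (skewMul k n) J ⊤ ≤ J := by
    rw [← span_range_monomial_one, Submodule.map₂_span_span, Submodule.span_le]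
    rintro _ ⟨_, ⟨_, ⟨α, rfl⟩, g, hg, rfl⟩, _, ⟨β, rfl⟩, rfl⟩
    obtain ⟨c, -, h⟩ := (hS g hg α β).2
    simp only [SetLike.mem_coe, h]
    exact J.smul_mem c (hmem (α + β) hg)
  exact ⟨hleft (Submodule.apply_mem_map₂ _ Submodule.mem_top hx),
    hright (Submodule.apply_mem_map₂ _ hx Submodule.mem_top)⟩

theorem restrictScalars_ideal_span_eq_skewIdeal {S : Set (MvPolynomial (Fin n) k)}
    (hS : ∀ g ∈ S, IsSkewNormal g) : (Ideal.span S).restrictScalars k = skewIdeal k n S := by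
  rw [restrictScalars_ideal_span]
  refine le_antisymm (span_monomialMultiples_le_skewIdeal hS) (skewIdeal_le (fun g hg => ?_)
    fun x hx f => skewMul_mem_span_monomialMultiples hS hx f)
  simpa only [monomial_zero', C_1, one_mul] using
    Submodule.subset_span (monomial_mul_mem_monomialMultiples 0 hg)

end

theorem comm_ideal_eq_skew_ideal (m p : ℕ) (hm : Even m) :
    (Ideal.span (invGens k n m p)).restrictScalars k = skewIdeal k n (invGens k n m p) :=
  restrictScalars_ideal_span_eq_skewIdeal (isSkewNormal_of_mem_invGens hm p)

end
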